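/- Let Z : ℝ × ℝ → ℂ be smooth with |∂_s Z| ≡ 1, tangent angle φ (∂_s Z = e^{iφ}, φ smooth real) and curvature k = ∂_s φ. Suppose the deformation velocity is v = (1/2)k² + i·∂_s k, i.e. ∂_t Z = ((1/2)k² + i ∂_s k)·∂_s Z. Then the isometric condition k·(∂_s k) = ∂_s((1/2)k²) holds, and the curvature satisfies the modified KdV equation ∂_t k = ∂_s³ k + (3/2) k² ∂_s k; equivalently ∂_t k = Ω_II(∂_s k), the first nonstationary flow of the mKdV hierarchy applied to the stationary flow ∂_{t₁} k = ∂_s k. -/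

import Mathlib

open Real

/-- Partial derivative in the first (arclength) variable, `ℂ`-valued. -/
noncomputable def dS (f : ℝ → ℝ → ℂ) (s t : ℝ) : ℂ := deriv (fun σ => f σ t) s

/-- Partial derivative in the second (time) variable, `ℂ`-valued. -/
noncomputable def dT (f : ℝ → ℝ → ℂ) (s t : ℝ) : ℂ := deriv (fun τ => f s τ) t

/-- Partial derivative in the first (arclength) variable, `ℝ`-valued. -/
noncomputable def dSr (f : ℝ → ℝ → ℝ) (s t : ℝ) : ℝ := deriv (fun σ => f σ t) s

/-- Partial derivative in the second (time) variable, `ℝ`-valued. -/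
noncomputable def dTr (f : ℝ → ℝ → ℝ) (s t : ℝ) : ℝ := deriv (fun τ => f s τ) t

/-!
Since `∂ₛZ = e^{iφ}`, symmetry of the mixed partials `∂ₛ∂ₜZ = ∂ₜ∂ₛZ` reads
`(∂ₛv + i k v) e^{iφ} = i ∂ₜφ e^{iφ}`. Its real part is the isometric condition
`k vⁱ = ∂ₛvʳ`, its imaginary part is `∂ₜφ = ∂ₛvⁱ + k vʳ`. For `v = k²/2 + i ∂ₛk` this says
`∂ₜφ = ∂ₛ²k + k³/2`, and `∂ₜk = ∂ₛ∂ₜφ` (symmetry of the mixed partials of `φ`) is the mKdV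
equation.
-/

open Function
open scoped ContDiff

section PartialDerivatives

variable {E : Type*} [NormedAddCommGroup E] [NormedSpace ℝ E]

theorem DifferentiableAt.hasDerivAt_slice_fst {g : ℝ × ℝ → E} {s t : ℝ}
    (hg : DifferentiableAt ℝ g (s, t)) :
    HasDerivAt (fun σ => g (σ, t)) (fderiv ℝ g (s, t) (1, 0)) s :=
  hg.hasFDerivAt.comp_hasDerivAt s ((hasDerivAt_id s).prodMk (hasDerivAt_const s t))

theorem DifferentiableAt.hasDerivAt_slice_snd {g : ℝ × ℝ → E} {s t : ℝ}
    (hg : DifferentiableAt ℝ g (s, t)) :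
    HasDerivAt (fun τ => g (s, τ)) (fderiv ℝ g (s, t) (0, 1)) t :=
  hg.hasFDerivAt.comp_hasDerivAt t ((hasDerivAt_const t s).prodMk (hasDerivAt_id t))

variable {f : ℝ → ℝ → E}

theorem ContDiff.uncurry_deriv_fst {m n : WithTop ℕ∞} (hf : ContDiff ℝ n (uncurry f))
    (hmn : m + 1 ≤ n) : ContDiff ℝ m (uncurry fun s t => deriv (fun σ => f σ t) s) := by
  have hd : Differentiable ℝ (uncurry f) := hf.differentiable (by rintro rfl; simp at hmn)
  have hpartial : (uncurry fun s t => deriv (fun σ => f σ t) s)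
      = fun p => fderiv ℝ (uncurry f) p (1, 0) :=
    funext fun p => (hd p).hasDerivAt_slice_fst.deriv
  rw [hpartial]
  exact (hf.fderiv_right hmn).clm_apply contDiff_const

theorem deriv_fst_deriv_snd_comm (hf : ContDiff ℝ 2 (uncurry f)) (s t : ℝ) :
    deriv (fun σ => deriv (fun τ => f σ τ) t) s
      = deriv (fun τ => deriv (fun σ => f σ τ) s) t := by
  set F := uncurry f
  have hF : Differentiable ℝ F := hf.differentiable (by norm_num)
  have hF' : DifferentiableAt ℝ (fderiv ℝ F) (s, t) :=
    (hf.fderiv_right (m := 1) (by norm_num)).differentiable one_ne_zero _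
  have hsnd : (fun σ => deriv (fun τ => f σ τ) t) = fun σ => fderiv ℝ F (σ, t) (0, 1) :=
    funext fun σ => (hF _).hasDerivAt_slice_snd.deriv
  have hfst : (fun τ => deriv (fun σ => f σ τ) s) = fun τ => fderiv ℝ F (s, τ) (1, 0) :=
    funext fun τ => (hF _).hasDerivAt_slice_fst.deriv
  have happly (v : ℝ × ℝ) : DifferentiableAt ℝ (fun p => fderiv ℝ F p v) (s, t) :=
    hF'.clm_apply (differentiableAt_const v)
  rw [hsnd, hfst, (happly _).hasDerivAt_slice_fst.deriv, (happly _).hasDerivAt_slice_snd.deriv,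
    fderiv_clm_apply hF' (differentiableAt_const _),
    fderiv_clm_apply hF' (differentiableAt_const _)]
  simpa using (hf.contDiffAt.isSymmSndFDerivAt (by simp)).eq (1, 0) (0, 1)

end PartialDerivatives

theorem HasDerivAt.cexp_I_mul_ofReal {g : ℝ → ℝ} {g' x : ℝ} (hg : HasDerivAt g g' x) :
    HasDerivAt (fun y => Complex.exp (Complex.I * g y))
      (Complex.I * g' * Complex.exp (Complex.I * g x)) x := by
  simpa only [mul_comm] using (hg.ofReal_comp.const_mul Complex.I).cexp

theorem isometric_conditions {Z : ℝ → ℝ → ℂ} {φ vr vi : ℝ → ℝ → ℝ}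
    (hZ : ContDiff ℝ 2 (uncurry Z)) (hφ : Differentiable ℝ (uncurry φ))
    (hvr : ∀ s t, DifferentiableAt ℝ (fun σ => vr σ t) s)
    (hvi : ∀ s t, DifferentiableAt ℝ (fun σ => vi σ t) s)
    (htan : ∀ s t, dS Z s t = Complex.exp (Complex.I * φ s t))
    (hdef : ∀ s t, dT Z s t = (vr s t + Complex.I * vi s t) * dS Z s t) (s t : ℝ) :
    dSr φ s t * vi s t = dSr vr s t ∧ dTr φ s t = dSr vi s t + dSr φ s t * vr s t := by
  set e := Complex.exp (Complex.I * φ s t)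
  have hdS : dS Z = fun σ τ => Complex.exp (Complex.I * φ σ τ) := funext₂ htan
  have hdT : dT Z
      = fun σ τ => (vr σ τ + Complex.I * vi σ τ) * Complex.exp (Complex.I * φ σ τ) := by
    funext σ τ; rw [hdef, htan]
  have hφs : HasDerivAt (fun σ => φ σ t) (dSr φ s t) s :=
    (hφ (s, t)).hasDerivAt_slice_fst.differentiableAt.hasDerivAt
  have hφt : HasDerivAt (fun τ => φ s τ) (dTr φ s t) t :=
    (hφ (s, t)).hasDerivAt_slice_snd.differentiableAt.hasDerivAt
  have hv : HasDerivAt (fun σ => (vr σ t : ℂ) + Complex.I * vi σ t)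
      (dSr vr s t + Complex.I * dSr vi s t) s :=
    (hvr s t).hasDerivAt.ofReal_comp.add ((hvi s t).hasDerivAt.ofReal_comp.const_mul Complex.I)
  have hst : dS (dT Z) s t
      = (dSr vr s t + Complex.I * dSr vi s t
          + (vr s t + Complex.I * vi s t) * (Complex.I * dSr φ s t)) * e := by
    rw [hdT]
    exact (hv.mul hφs.cexp_I_mul_ofReal).deriv.trans (by ring)
  have hts : dT (dS Z) s t = Complex.I * dTr φ s t * e := by
    rw [hdS]
    exact hφt.cexp_I_mul_ofReal.deriv
  have hmixed := mul_right_cancel₀ (Complex.exp_ne_zero _)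
    (hst.symm.trans ((deriv_fst_deriv_snd_comm hZ s t).trans hts))
  have hre := congrArg Complex.re hmixed
  have him := congrArg Complex.im hmixed
  simp only [Complex.add_re, Complex.add_im, Complex.mul_re, Complex.mul_im, Complex.ofReal_re,
    Complex.ofReal_im, Complex.I_re, Complex.I_im] at hre him
  constructor <;> linarith

theorem mkdv_flow_from_curvature_velocity_general
    (Z : ℝ → ℝ → ℂ) (φ k : ℝ → ℝ → ℝ)
    (hZ : ContDiff ℝ (⊤:ℕ∞) (fun p : ℝ × ℝ => Z p.1 p.2))
    (hφ : ContDiff ℝ (⊤:ℕ∞) (fun p : ℝ × ℝ => φ p.1 p.2))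
    (htan : ∀ s t, dS Z s t = Complex.exp (Complex.I * φ s t))
    (hk : ∀ s t, k s t = dSr φ s t)
    (hdef : ∀ s t, dT Z s t
      = (Complex.ofReal ((1/2) * (k s t) ^ 2)
          + Complex.I * Complex.ofReal (dSr k s t)) * dS Z s t) :
    (∀ s t, k s t * dSr k s t = dSr (fun σ τ => (1/2) * (k σ τ) ^ 2) s t) ∧
    (∀ s t, dTr k s t
      = dSr (fun σ τ => dSr (fun a b => dSr k a b) σ τ) s t
        + (3/2) * (k s t) ^ 2 * dSr k s t) := by
  obtain rfl : k = dSr φ := funext₂ hk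
  have h2 : (2 : WithTop ℕ∞) ≤ ∞ := WithTop.coe_le_coe.mpr le_top
  have hk₀ : ContDiff ℝ ∞ (uncurry (dSr φ)) := hφ.uncurry_deriv_fst le_rfl
  have hk₁ : ContDiff ℝ ∞ (uncurry (dSr (dSr φ))) := hk₀.uncurry_deriv_fst le_rfl
  have hk₂ : ContDiff ℝ ∞ (uncurry (dSr (dSr (dSr φ)))) := hk₁.uncurry_deriv_fst le_rfl
  have hslice {g : ℝ → ℝ → ℝ} (hg : ContDiff ℝ ∞ (uncurry g)) (s t : ℝ) :
      HasDerivAt (fun σ => g σ t) (dSr g s t) s :=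
    ((hg.differentiable (by simp)) (s, t)).hasDerivAt_slice_fst.differentiableAt.hasDerivAt
  have hcond := isometric_conditions (vr := fun σ τ => 1 / 2 * dSr φ σ τ ^ 2)
    (hZ.of_le h2) (hφ.differentiable (by simp))
    (fun s t => ((hslice hk₀ s t).pow 2).const_mul (1 / 2 : ℝ) |>.differentiableAt)
    (fun s t => (hslice hk₁ s t).differentiableAt) htan hdef
  refine ⟨fun s t => (hcond s t).1, fun s t => ?_⟩
  have hangle : dTr φ = fun σ τ => dSr (dSr (dSr φ)) σ τ + 1 / 2 * dSr φ σ τ ^ 3 := by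
    funext σ τ
    rw [(hcond σ τ).2]
    ring
  calc dTr (dSr φ) s t = dSr (dTr φ) s t := (deriv_fst_deriv_snd_comm (hφ.of_le h2) s t).symm
    _ = _ := by
      rw [hangle]
      exact ((hslice hk₂ s t).add (((hslice hk₀ s t).pow 3).const_mul (1 / 2 : ℝ))).deriv.trans
        (by ring)

/-- For an isometric deformation `Z(s,t)` (`|∂ₛZ| ≡ 1`)
with tangent angle `φ`, curvature `k = ∂ₛφ`, and deformation velocity
`v = (1/2)k² + i ∂ₛk`, i.e. `∂ₜZ = ((1/2)k² + i ∂ₛk) ∂ₛZ`, the isometric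
condition `k ∂ₛk = ∂ₛ((1/2)k²)` holds and the curvature satisfies the
modified KdV equation `∂ₜk = ∂ₛ³k + (3/2) k² ∂ₛk` (equivalently
`∂ₜk = Ω_II(∂ₛk)`, the first nonstationary mKdV flow). -/
theorem mkdv_flow_from_curvature_velocity
    (Z : ℝ → ℝ → ℂ) (φ k : ℝ → ℝ → ℝ)
    (hZ : ContDiff ℝ (⊤:ℕ∞) (fun p : ℝ × ℝ => Z p.1 p.2))
    (hφ : ContDiff ℝ (⊤:ℕ∞) (fun p : ℝ × ℝ => φ p.1 p.2))
    (hunit : ∀ s t, ‖dS Z s t‖ = 1)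
    (htan : ∀ s t, dS Z s t = Complex.exp (Complex.I * φ s t))
    (hk : ∀ s t, k s t = dSr φ s t)
    (hdef : ∀ s t, dT Z s t
      = (Complex.ofReal ((1/2) * (k s t) ^ 2)
          + Complex.I * Complex.ofReal (dSr k s t)) * dS Z s t) :
    (∀ s t, k s t * dSr k s t = dSr (fun σ τ => (1/2) * (k σ τ) ^ 2) s t) ∧
    (∀ s t, dTr k s t
      = dSr (fun σ τ => dSr (fun a b => dSr k a b) σ τ) s t
        + (3/2) * (k s t) ^ 2 * dSr k s t) :=
  mkdv_flow_from_curvature_velocity_general Z φ k hZ hφ htan hk hdef
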